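/- Let k be an algebraically closed field of characteristic 0, q ∈ k a root of unity of order at least 3, and a ∈ k a nonzero scalar. Let the 3×3 braiding matrix be q_{11} = −1, q_{12} = a, q_{13} = −a⁻², q_{21} = q⁻¹a⁻¹, q_{22} = −1, q_{23} = qa, q_{31} = −a², q_{32} = a⁻¹, q_{33} = −1 (super type A₃ with all diagonal entries −1). Then for every ν ∈ k, the quotient of the free algebra k⟨y_1,y_2,y_3⟩ by the two-sided ideal generated by y_1², y_2², y_3², y_{13}, and [y_{(13)}, y_2]_c − ν is a nontrivial algebra. -/

import Mathlib

/-- The `q`-bilinear form `q(α,β) = ∏ i j, (q i j) ^ (α i * β j)` on `ℕⁿ`-degrees. -/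
noncomputable def qForm {k : Type*} [Field k] {n : ℕ} (q : Fin n → Fin n → k)
    (α β : Fin n → ℕ) : k :=
  ∏ i : Fin n, ∏ j : Fin n, q i j ^ (α i * β j)

/-- The braided commutator on pairs (homogeneous element, its `ℕⁿ`-degree):
`[u,v]_c = u v − q(deg u, deg v) v u`. -/
noncomputable def bc {k : Type*} [Field k] {n : ℕ} (q : Fin n → Fin n → k)
    (u v : FreeAlgebra k (Fin n) × (Fin n → ℕ)) :
    FreeAlgebra k (Fin n) × (Fin n → ℕ) :=
  (u.1 * v.1 - qForm q u.2 v.2 • (v.1 * u.1), fun i => u.2 i + v.2 i)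

/-- The generator `y i` of the free algebra, together with its degree `e_i`. -/
noncomputable def ygen (k : Type*) [Field k] {n : ℕ} (i : Fin n) :
    FreeAlgebra k (Fin n) × (Fin n → ℕ) :=
  (FreeAlgebra.ι k i, fun j => if j = i then 1 else 0)

/-!
The quotient is nontrivial because it has a nonzero representation on `k²`: send `y₁ ↦ E`,
`y₂ ↦ F` and `y₃ ↦ c • E`, where `E`, `F` are the elementary nilpotent `2 × 2` matrices. The
squares of the generators and `y₁₃` map to `0` because `E² = F² = 0`. With the given braiding
the image of `[y₍₁₃₎, y₂]_c` is `c (1 - q) • 1`, so `c = ν / (1 - q)` (possible as `q ≠ 1`)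
kills the last relation as well.
-/

theorem TwoSidedIdeal.one_notMem_span_of_map_eq_zero {R S F : Type*} [Ring R] [Ring S]
    [Nontrivial S] [FunLike F R S] [RingHomClass F R S] (f : F) {s : Set R}
    (hs : ∀ x ∈ s, f x = 0) : (1 : R) ∉ span s := fun h ↦ by
  have := span_le.2 (fun x hx ↦ (mem_ker f).2 (hs x hx)) h
  simp [mem_ker] at this

section Braiding

variable {k : Type*} [Field k] {n : ℕ} (q : Fin n → Fin n → k)

theorem qForm_add_left (α β γ : Fin n → ℕ) :
    qForm q (α + β) γ = qForm q α γ * qForm q β γ := by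
  simp only [qForm, Pi.add_apply, add_mul, pow_add, Finset.prod_mul_distrib]

theorem qForm_add_right (α β γ : Fin n → ℕ) :
    qForm q α (β + γ) = qForm q α β * qForm q α γ := by
  simp only [qForm, Pi.add_apply, mul_add, pow_add, Finset.prod_mul_distrib]

theorem qForm_single_single (i j : Fin n) :
    qForm q (Pi.single i 1) (Pi.single j 1) = q i j := by
  simp [qForm, Pi.single_apply]

theorem ygen_fst (i : Fin n) : (ygen k i).1 = FreeAlgebra.ι k i := rfl

theorem ygen_snd (i : Fin n) : (ygen k i).2 = Pi.single i 1 := by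
  ext j
  simp [ygen, Pi.single_apply]

theorem bc_snd (u v : FreeAlgebra k (Fin n) × (Fin n → ℕ)) : (bc q u v).2 = u.2 + v.2 := rfl

theorem AlgHom.map_bc_fst {A : Type*} [Ring A] [Algebra k A]
    (φ : FreeAlgebra k (Fin n) →ₐ[k] A) (u v : FreeAlgebra k (Fin n) × (Fin n → ℕ)) :
    φ (bc q u v).1 = φ u.1 * φ v.1 - qForm q u.2 v.2 • (φ v.1 * φ u.1) := by
  simp [bc]

end Braiding

namespace Matrix

variable {R : Type*} [CommRing R]

theorem fin_two_e12_mul_self :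
    (!![0, 1; 0, 0] * !![0, 1; 0, 0] : Matrix (Fin 2) (Fin 2) R) = 0 := by
  ext i j; fin_cases i <;> fin_cases j <;> simp

theorem fin_two_e21_mul_self :
    (!![0, 0; 1, 0] * !![0, 0; 1, 0] : Matrix (Fin 2) (Fin 2) R) = 0 := by
  ext i j; fin_cases i <;> fin_cases j <;> simp

theorem fin_two_e21_e12_bracket (c s : R) :
    !![0, 0; 1, 0] * c • !![0, 1; 0, 0] - s • (c • !![0, 1; 0, 0] * !![0, 0; 1, 0]) =
      c • !![-s, 0; 0, (1 : R)] := by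
  ext i j; fin_cases i <;> fin_cases j <;> simp [mul_comm]

theorem fin_two_e12_diagonal_bracket (c s t : R) :
    !![0, 1; 0, 0] * c • !![-s, 0; 0, 1] - t • (c • !![-s, 0; 0, 1] * !![0, 1; 0, 0]) =
      (c * (1 + t * s)) • !![0, 1; 0, (0 : R)] := by
  ext i j; fin_cases i <;> fin_cases j <;> simp; ring

theorem fin_two_e12_e21_bracket (c r : R) :
    c • !![0, 1; 0, 0] * !![0, 0; 1, 0] - r • (!![0, 0; 1, 0] * c • !![0, 1; 0, 0]) =
      c • !![1, 0; 0, -r] := by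
  ext i j; fin_cases i <;> fin_cases j <;> simp [mul_comm]

end Matrix

open Matrix in
theorem map_bc_bc_bc_of_fin_two {k : Type*} [Field k] {n : ℕ} (q : Fin n → Fin n → k)
    (φ : FreeAlgebra k (Fin n) →ₐ[k] Matrix (Fin 2) (Fin 2) k) (i j l : Fin n) (c : k)
    (hi : φ (FreeAlgebra.ι k i) = !![0, 1; 0, 0]) (hj : φ (FreeAlgebra.ι k j) = !![0, 0; 1, 0])
    (hl : φ (FreeAlgebra.ι k l) = c • !![0, 1; 0, 0]) :
    φ (bc q (bc q (ygen k i) (bc q (ygen k j) (ygen k l))) (ygen k j)).1 =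
      (c * (1 + qForm q (ygen k i).2 ((ygen k j).2 + (ygen k l).2) *
        qForm q (ygen k j).2 (ygen k l).2)) •
      !![1, 0; 0, -qForm q ((ygen k i).2 + ((ygen k j).2 + (ygen k l).2)) (ygen k j).2] := by
  simp only [AlgHom.map_bc_fst, bc_snd, ygen_fst, hi, hj, hl]
  rw [fin_two_e21_e12_bracket, fin_two_e12_diagonal_bracket, fin_two_e12_e21_bracket]

theorem statement_15_general {k : Type*} [Field k]
    (m : ℕ) (hm : 3 ≤ m) (q₀ : k) (hq₀ : IsPrimitiveRoot q₀ m) (a : k) (ha : a ≠ 0)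
    (ν : k)
    (q : Fin 3 → Fin 3 → k) (hq : q = ![![-1, a, -(a ^ 2)⁻¹], ![q₀⁻¹ * a⁻¹, -1, q₀ * a], ![-a ^ 2, a⁻¹, -1]]) :
    (1 : FreeAlgebra k (Fin 3)) ∉ TwoSidedIdeal.span
      ({FreeAlgebra.ι k (0 : Fin 3) ^ 2,
        FreeAlgebra.ι k (1 : Fin 3) ^ 2,
        FreeAlgebra.ι k (2 : Fin 3) ^ 2,
        (bc q (ygen k 0) (ygen k 2)).1,
        (bc q (bc q (ygen k 0) (bc q (ygen k 1) (ygen k 2))) (ygen k 1)).1 - algebraMap k (FreeAlgebra k (Fin 3)) ν} : Set (FreeAlgebra k (Fin 3))) := by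
  have hq₀ : 1 - q₀ ≠ 0 := sub_ne_zero.2 (hq₀.ne_one (by omega)).symm
  have q12 : qForm q (ygen k 1).2 (ygen k 2).2 = q₀ * a := by
    simp [hq, ygen_snd, qForm_single_single]
  have q0_12 : qForm q (ygen k 0).2 ((ygen k 1).2 + (ygen k 2).2) = -a⁻¹ := by
    simp [hq, ygen_snd, qForm_add_right, qForm_single_single, sq, ha]
  have q012_1 : qForm q ((ygen k 0).2 + ((ygen k 1).2 + (ygen k 2).2)) (ygen k 1).2 = -1 := by
    simp [hq, ygen_snd, qForm_add_left, qForm_single_single, ha]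
  have hcoef : ν / (1 - q₀) * (1 + -a⁻¹ * (q₀ * a)) = ν := by
    field_simp
    ring
  let φ := FreeAlgebra.lift k
    ![!![(0 : k), 1; 0, 0], !![0, 0; 1, 0], (ν / (1 - q₀)) • !![0, 1; 0, 0]]
  have φ0 : φ (FreeAlgebra.ι k 0) = !![0, 1; 0, 0] := FreeAlgebra.lift_ι_apply _ _
  have φ1 : φ (FreeAlgebra.ι k 1) = !![0, 0; 1, 0] := FreeAlgebra.lift_ι_apply _ _
  have φ2 : φ (FreeAlgebra.ι k 2) = (ν / (1 - q₀)) • !![0, 1; 0, 0] :=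
    FreeAlgebra.lift_ι_apply _ _
  refine TwoSidedIdeal.one_notMem_span_of_map_eq_zero φ ?_
  simp only [Set.mem_insert_iff, Set.mem_singleton_iff, forall_eq_or_imp, forall_eq]
  refine ⟨?_, ?_, ?_, ?_, ?_⟩
  · rw [map_pow, φ0, sq, Matrix.fin_two_e12_mul_self]
  · rw [map_pow, φ1, sq, Matrix.fin_two_e21_mul_self]
  · rw [map_pow, φ2, sq, smul_mul_smul, Matrix.fin_two_e12_mul_self, smul_zero]
  · rw [AlgHom.map_bc_fst, ygen_fst, ygen_fst, φ0, φ2, mul_smul_comm, smul_mul_assoc,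
      Matrix.fin_two_e12_mul_self, smul_zero, smul_zero, sub_zero]
  · rw [map_sub, map_bc_bc_bc_of_fin_two q φ 0 1 2 _ φ0 φ1 φ2, q12, q0_12, q012_1, hcoef,
      neg_neg, AlgHom.commutes, ← Matrix.one_fin_two, Algebra.algebraMap_eq_smul_one, sub_self]

theorem statement_15 {k : Type*} [Field k] [IsAlgClosed k] [CharZero k]
    (m : ℕ) (hm : 3 ≤ m) (q₀ : k) (hq₀ : IsPrimitiveRoot q₀ m) (a : k) (ha : a ≠ 0)
    (ν : k)
    (q : Fin 3 → Fin 3 → k) (hq : q = ![![-1, a, -(a ^ 2)⁻¹], ![q₀⁻¹ * a⁻¹, -1, q₀ * a], ![-a ^ 2, a⁻¹, -1]]) :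
    (1 : FreeAlgebra k (Fin 3)) ∉ TwoSidedIdeal.span
      ({FreeAlgebra.ι k (0 : Fin 3) ^ 2,
        FreeAlgebra.ι k (1 : Fin 3) ^ 2,
        FreeAlgebra.ι k (2 : Fin 3) ^ 2,
        (bc q (ygen k 0) (ygen k 2)).1,
        (bc q (bc q (ygen k 0) (bc q (ygen k 1) (ygen k 2))) (ygen k 1)).1 - algebraMap k (FreeAlgebra k (Fin 3)) ν} : Set (FreeAlgebra k (Fin 3))) :=
  statement_15_general m hm q₀ hq₀ a ha ν q hq
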